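/- Let A be a modal algebra (no monotonicity assumed), S a countable family of subsets of A, Q_S(A) the set of Q-filters of A for S, f(x) = {G ∈ Q_S(A) | x ∈ G}, and V̄_A(F) = {f(y) | □y ∈ F}. If F ∈ Q_S(A) and x ∈ A satisfy □x ∉ F, then f(x) ∉ V̄_A(F); equivalently, for every y ∈ A with □y ∈ F one has f(y) ≠ f(x). -/
import Mathlib


variable {α : Type*}

/-- A filter of a Boolean algebra: a nonempty, upward-closed subset
closed under binary meets. -/
def IsGoodFilter [BooleanAlgebra α] (F : Set α) : Prop :=
  F.Nonempty ∧ (∀ x y : α, x ∈ F → x ≤ y → y ∈ F) ∧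
    (∀ x y : α, x ∈ F → y ∈ F → x ⊓ y ∈ F)

/-- A prime filter: a proper filter (⊥ ∉ F) such that x ⊔ y ∈ F implies
x ∈ F or y ∈ F. -/
def IsPrimeFilter [BooleanAlgebra α] (F : Set α) : Prop :=
  IsGoodFilter F ∧ (⊥ : α) ∉ F ∧ ∀ x y : α, x ⊔ y ∈ F → x ∈ F ∨ y ∈ F

/-- A Q-filter for a family `S` of subsets: a prime filter such that for every
`X ∈ S` whose infimum exists and with `X ⊆ F`, the infimum belongs to `F`. -/
def IsQFilter [BooleanAlgebra α] (S : Set (Set α)) (F : Set α) : Prop :=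
  IsPrimeFilter F ∧ ∀ X ∈ S, ∀ m : α, IsGLB X m → X ⊆ F → m ∈ F

/-- The set of all Q-filters for `S`. -/
abbrev QFilt [BooleanAlgebra α] (S : Set (Set α)) := {F : Set α // IsQFilter S F}

/-- The Stone-style map `f x = {F ∈ Q_S(A) | x ∈ F}`. -/
def fset [BooleanAlgebra α] (S : Set (Set α)) (x : α) : Set (QFilt S) :=
  {F | x ∈ F.1}

/-- The neighborhood map of the frame `J_S(A)`: the upward closure (under ⊆)
of the family `{f y | □y ∈ F}`. -/
def nbhd [BooleanAlgebra α] (box : α → α) (S : Set (Set α)) (F : QFilt S) :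
    Set (Set (QFilt S)) :=
  {X | ∃ y : α, box y ∈ F.1 ∧ fset S y ⊆ X}

/-- The neighborhood map of the frame `J̄_S(A)`: the family `{f y | □y ∈ F}`,
without taking upward closure. -/
def nbhdBar [BooleanAlgebra α] (box : α → α) (S : Set (Set α)) (F : QFilt S) :
    Set (Set (QFilt S)) :=
  {X | ∃ y : α, box y ∈ F.1 ∧ fset S y = X}

section Aux
variable [BooleanAlgebra α]

open Classical in
/-- One refinement step. -/
noncomputable def qstep (c : α) (X : Set α) : α :=
  if h : ∃ b ∈ X, ¬ c ≤ b then c ⊓ (h.choose)ᶜ else c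

lemma qstep_le (c : α) (X : Set α) : qstep c X ≤ c := by
  unfold qstep; split
  · exact inf_le_left
  · exact le_rfl

lemma qstep_ne_bot {c : α} (hc : c ≠ ⊥) (X : Set α) : qstep c X ≠ ⊥ := by
  unfold qstep; split
  · next h =>
    have hb := h.choose_spec
    rw [← sdiff_eq]
    intro hbot
    exact hb.2 (sdiff_eq_bot_iff.mp hbot)
  · exact hc

lemma qstep_key {c : α} {X : Set α} {G : Set α} (hG : IsGoodFilter G)
    (hbot : (⊥ : α) ∉ G) (hcG : c ∈ G) (hsG : qstep c X ∈ G) {m : α}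
    (hm : IsGLB X m) (hXG : X ⊆ G) : m ∈ G := by
  unfold qstep at hsG
  split at hsG
  · next h =>
    obtain ⟨hbX, -⟩ := h.choose_spec
    exfalso
    have h1 : h.choose ⊓ (c ⊓ (h.choose)ᶜ) ∈ G := hG.2.2 _ _ (hXG hbX) hsG
    have hle : h.choose ⊓ (c ⊓ (h.choose)ᶜ) ≤ ⊥ := by
      calc h.choose ⊓ (c ⊓ (h.choose)ᶜ) ≤ h.choose ⊓ (h.choose)ᶜ :=
            inf_le_inf_left _ inf_le_right
        _ = ⊥ := inf_compl_eq_bot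
    exact hbot (le_bot_iff.mp hle ▸ h1)
  · next h =>
    push_neg at h
    exact hG.2.1 c m hcG (hm.2 fun b hb => h b hb)

/-- Rasiowa–Sikorski style: any nonzero element lies in some Q-filter. -/
theorem exists_qfilter (S : Set (Set α)) (hS : S.Countable) {a : α} (ha : a ≠ ⊥) :
    ∃ G : Set α, IsQFilter S G ∧ a ∈ G := by
  obtain ⟨e, he⟩ : ∃ e : ℕ → Set α, ∀ X ∈ S, ∃ n, e n = X := by
    rcases S.eq_empty_or_nonempty with h | h
    · exact ⟨fun _ => ∅, by simp [h]⟩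
    · obtain ⟨e, rfl⟩ := hS.exists_eq_range h
      exact ⟨e, fun X hX => hX⟩
  let seq : ℕ → α := fun n => Nat.rec a (fun k c => qstep c (e k)) n
  have seq_succ : ∀ n, seq (n + 1) = qstep (seq n) (e n) := fun n => rfl
  have seq_ne : ∀ n, seq n ≠ ⊥ := by
    intro n; induction n with
    | zero => exact ha
    | succ k ih => rw [seq_succ]; exact qstep_ne_bot ih _
  have seq_anti : ∀ {m n : ℕ}, m ≤ n → seq n ≤ seq m := by
    intro m n h
    induction n with
    | zero => simp_all
    | succ k ih =>
      rcases Nat.lt_or_ge m (k+1) with h' | h'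
      · exact (seq_succ k ▸ qstep_le _ _).trans (ih (Nat.lt_succ_iff.mp h'))
      · have : m = k + 1 := le_antisymm h h'
        simp [this]
  set F0 : Set α := {z | ∃ n, seq n ≤ z} with hF0
  have hF0good : IsGoodFilter F0 := by
    refine ⟨⟨a, 0, le_rfl⟩, fun x y hx hxy => ?_, fun x y hx hy => ?_⟩
    · obtain ⟨n, hn⟩ := hx; exact ⟨n, hn.trans hxy⟩
    · obtain ⟨n, hn⟩ := hx; obtain ⟨k, hk⟩ := hy
      exact ⟨max n k, le_inf ((seq_anti (le_max_left n k)).trans hn)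
        ((seq_anti (le_max_right n k)).trans hk)⟩
  have hF0bot : (⊥ : α) ∉ F0 := by
    rintro ⟨n, hn⟩; exact seq_ne n (le_bot_iff.mp hn)
  set P : Set (Set α) := {G | IsGoodFilter G ∧ (⊥ : α) ∉ G ∧ F0 ⊆ G} with hP
  have hzorn : ∀ c ⊆ P, IsChain (· ⊆ ·) c → c.Nonempty →
      ∃ ub ∈ P, ∀ s ∈ c, s ⊆ ub := by
    intro c hcP hchain hcne
    refine ⟨⋃₀ c, ⟨⟨?_, ?_, ?_⟩, ?_, ?_⟩, fun s hs => Set.subset_sUnion_of_mem hs⟩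
    · obtain ⟨s, hs⟩ := hcne
      obtain ⟨z, hz⟩ := (hcP hs).1.1
      exact ⟨z, s, hs, hz⟩
    · rintro x y ⟨s, hs, hx⟩ hxy
      exact ⟨s, hs, (hcP hs).1.2.1 x y hx hxy⟩
    · rintro x y ⟨s, hs, hx⟩ ⟨t, ht, hy⟩
      rcases hchain.total hs ht with h | h
      · exact ⟨t, ht, (hcP ht).1.2.2 x y (h hx) hy⟩
      · exact ⟨s, hs, (hcP hs).1.2.2 x y hx (h hy)⟩
    · rintro ⟨s, hs, hbot⟩; exact (hcP hs).2.1 hbot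
    · obtain ⟨s, hs⟩ := hcne
      exact fun z hz => ⟨s, hs, (hcP hs).2.2 hz⟩
  obtain ⟨U, hF0U, hUP, hUmax⟩ :
      ∃ U, F0 ⊆ U ∧ U ∈ P ∧ ∀ V ∈ P, U ⊆ V → V ⊆ U := by
    obtain ⟨U, h1, h2⟩ := zorn_subset_nonempty P hzorn F0 ⟨hF0good, hF0bot, Set.Subset.rfl⟩
    exact ⟨U, h1, h2.1, fun V hV hUV => h2.2 hV hUV⟩
  obtain ⟨hUgood, hUbot, -⟩ := hUP
  have hUaneU : U.Nonempty := hUgood.1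
  have hcompl : ∀ z : α, z ∉ U → zᶜ ∈ U := by
    intro z hz
    set V : Set α := {w | ∃ u ∈ U, u ⊓ z ≤ w} with hV
    by_cases hVbot : (⊥ : α) ∈ V
    · obtain ⟨u, huU, hu⟩ := hVbot
      have : u ≤ zᶜ :=
        le_compl_iff_disjoint_right.mpr (disjoint_iff.mpr (le_bot_iff.mp hu))
      exact hUgood.2.1 u zᶜ huU this
    · exfalso
      have hVP : V ∈ P := by
        refine ⟨⟨?_, ?_, ?_⟩, hVbot, fun w hw => ⟨w, hF0U hw, inf_le_left⟩⟩
        · obtain ⟨u, hu⟩ := hUaneU; exact ⟨u ⊓ z, u, hu, le_rfl⟩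
        · rintro w y ⟨u, huU, hu⟩ hwy; exact ⟨u, huU, hu.trans hwy⟩
        · rintro w y ⟨u, huU, hu⟩ ⟨v, hvU, hv⟩
          refine ⟨u ⊓ v, hUgood.2.2 u v huU hvU, ?_⟩
          calc u ⊓ v ⊓ z ≤ (u ⊓ z) ⊓ (v ⊓ z) :=
                le_inf (inf_le_inf_right _ inf_le_left) (inf_le_inf_right _ inf_le_right)
            _ ≤ w ⊓ y := inf_le_inf hu hv
      have hUV : U ⊆ V := fun u hu => ⟨u, hu, inf_le_left⟩
      have hzV : z ∈ V := by
        obtain ⟨u, hu⟩ := hUaneU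
        exact ⟨u, hu, inf_le_right⟩
      exact hz (hUmax V hVP hUV hzV)
  refine ⟨U, ⟨⟨hUgood, hUbot, ?_⟩, ?_⟩, hF0U ⟨0, le_rfl⟩⟩
  · intro p q hpq
    by_contra h
    push_neg at h
    have hp := hcompl p h.1
    have hq := hcompl q h.2
    have : (p ⊔ q) ⊓ (pᶜ ⊓ qᶜ) ∈ U := hUgood.2.2 _ _ hpq (hUgood.2.2 _ _ hp hq)
    rw [← compl_sup, inf_compl_eq_bot] at this
    exact hUbot this
  · intro X hX m hm hXU
    obtain ⟨n, rfl⟩ := he X hX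
    exact qstep_key hUgood hUbot (hF0U ⟨n, le_rfl⟩)
      (hF0U ⟨n + 1, (seq_succ n).ge⟩) hm hXU


end Aux

/-- Non-monotonic case: if `□x ∉ F` then `f x ∉ V̄_A(F)`; equivalently, for
every `y` with `□y ∈ F` one has `f y ≠ f x`. -/
theorem jbar_box_reflect [BooleanAlgebra α] (box : α → α)
    (S : Set (Set α)) (hS : S.Countable)
    (F : QFilt S) (x : α) (hx : box x ∉ F.1) :
    fset S x ∉ nbhdBar box S F ∧
    ∀ y : α, box y ∈ F.1 → fset S y ≠ fset S x := by
  have key : ∀ y : α, box y ∈ F.1 → fset S y ≠ fset S x := by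
    intro y hy heq
    have hyx : y = x := by
      by_contra hne
      have : ¬ y ≤ x ∨ ¬ x ≤ y := by
        by_contra h
        push_neg at h
        exact hne (le_antisymm h.1 h.2)
      rcases this with h | h
      · have ha : y \ x ≠ ⊥ := fun hb => h (sdiff_eq_bot_iff.mp hb)
        obtain ⟨G, hG, haG⟩ := exists_qfilter S hS ha
        have hyG : y ∈ G := hG.1.1.2.1 _ _ haG sdiff_le
        have hxG : x ∉ G := by
          intro hxG
          have h1 : x ⊓ y \ x ∈ G := hG.1.1.2.2 _ _ hxG haG
          have h2 : x ⊓ y \ x ≤ ⊥ := by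
            rw [sdiff_eq]
            calc x ⊓ (y ⊓ xᶜ) ≤ x ⊓ xᶜ := inf_le_inf_left _ inf_le_right
              _ = ⊥ := inf_compl_eq_bot
          exact hG.1.2.1 (le_bot_iff.mp h2 ▸ h1)
        have : (⟨G, hG⟩ : QFilt S) ∈ fset S y := hyG
        rw [heq] at this
        exact hxG this
      · have ha : x \ y ≠ ⊥ := fun hb => h (sdiff_eq_bot_iff.mp hb)
        obtain ⟨G, hG, haG⟩ := exists_qfilter S hS ha
        have hxG : x ∈ G := hG.1.1.2.1 _ _ haG sdiff_le
        have hyG : y ∉ G := by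
          intro hyG
          have h1 : y ⊓ x \ y ∈ G := hG.1.1.2.2 _ _ hyG haG
          have h2 : y ⊓ x \ y ≤ ⊥ := by
            rw [sdiff_eq]
            calc y ⊓ (x ⊓ yᶜ) ≤ y ⊓ yᶜ := inf_le_inf_left _ inf_le_right
              _ = ⊥ := inf_compl_eq_bot
          exact hG.1.2.1 (le_bot_iff.mp h2 ▸ h1)
        have : (⟨G, hG⟩ : QFilt S) ∈ fset S x := hxG
        rw [← heq] at this
        exact hyG this
    exact hx (hyx ▸ hy)
  refine ⟨?_, key⟩
  rintro ⟨y, hy, hfy⟩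
  exact key y hy hfy
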